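/- The shift S'_semi-mirror, consisting of the configurations of the semi-mirror shift in which the two half-planes differ in at most one pair of symmetric positions, is not sofic. -/

import Mathlib

/-- A cell of the two-dimensional grid `ℤ²`. -/
abbrev Cell : Type := ℤ × ℤ

/-- A configuration over the alphabet `A` is a map `ℤ² → A`. -/
abbrev Config (A : Type) : Type := Cell → A

/-- The translateCfg of a configuration `x` by `u` is `i ↦ x (i + u)`. -/
def translateCfg {A : Type} (u : Cell) (x : Config A) : Config A := fun i => x (i + u)

/-- The product topology on `A^(ℤ²)`, `A` being given the discrete topology. -/
def configTop (A : Type) : TopologicalSpace (Config A) :=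
  @Pi.topologicalSpace Cell (fun _ => A) (fun _ => ⊥)

/-- A shift (space) over `A`: a set of configurations invariant under all translations
and closed in the product topology (`A` discrete). -/
def IsShiftSpace {A : Type} (S : Set (Config A)) : Prop :=
  (∀ (u : Cell) (x : Config A), x ∈ S → translateCfg u x ∈ S) ∧
    @IsClosed (Config A) (configTop A) S

/-- A finite pattern: a function `P : F → A` with `F ⊆ ℤ²` finite. -/
structure Pattern (A : Type) where
  supp : Finset Cell
  val : supp → A

/-- `P` occurs in `x` if some translateCfg of `x` agrees with `P` on its support. -/
def Pattern.OccursIn {A : Type} (P : Pattern A) (x : Config A) : Prop :=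
  ∃ u : Cell, ∀ i : P.supp, x ((i : Cell) + u) = P.val i

/-- The shift defined by a set `F` of forbidden finite patterns. -/
def shiftOf {A : Type} (F : Set (Pattern A)) : Set (Config A) :=
  { x | ∀ P ∈ F, ¬ P.OccursIn x }

/-- A shift of finite type: a shift definable by a finite set of forbidden finite patterns. -/
def IsSFT {A : Type} (S : Set (Config A)) : Prop :=
  ∃ F : Set (Pattern A), F.Finite ∧ S = shiftOf F

/-- A sofic shift: a coordinatewise projection of a shift of finite type
over some finite alphabet. -/
def IsSofic {A : Type} (S : Set (Config A)) : Prop :=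
  ∃ (A' : Type) (_ : Fintype A') (S' : Set (Config A')) (π : A' → A),
    IsSFT S' ∧ S = (fun y => π ∘ y) '' S'

/-- The cell of `ℤ²` corresponding to an index in the `n × n` square `{0,…,n−1}²`. -/
def toCell {n : ℕ} (q : Fin n × Fin n) : Cell := ((q.1 : ℤ), (q.2 : ℤ))

/-- An `n × n` square pattern, i.e. a pattern with support `B_n = {0,…,n−1}²`. -/
abbrev SqPattern (A : Type) (n : ℕ) : Type := Fin n × Fin n → A

/-- An `n × n` square pattern occurs in `x` if some translateCfg of `x` agrees with it. -/
def SqOccursIn {A : Type} {n : ℕ} (P : SqPattern A n) (x : Config A) : Prop :=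
  ∃ u : Cell, ∀ q : Fin n × Fin n, x (toCell q + u) = P q

/-- A pattern is globally admissible for `S` if it occurs in some configuration of `S`. -/
def SqGloballyAdmissible {A : Type} {n : ℕ} (S : Set (Config A)) (P : SqPattern A n) : Prop :=
  ∃ x ∈ S, SqOccursIn P x

/-- Membership in the square `B_n = {0,…,n−1}² ⊆ ℤ²`. -/
def inBn (n : ℕ) (p : Cell) : Prop :=
  0 ≤ p.1 ∧ p.1 < (n : ℤ) ∧ 0 ≤ p.2 ∧ p.2 < (n : ℤ)

instance (n : ℕ) (p : Cell) : Decidable (inBn n p) := by unfold inBn; infer_instance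

/-- A pattern on `F_n = ℤ² \ B_n`, the complement of the `n × n` square. -/
abbrev ExtPattern (A : Type) (n : ℕ) : Type := { p : Cell // ¬ inBn n p } → A

/-- The configuration `P ∪ Q`, equal to `P` on `B_n` and to `Q` on `F_n`. -/
def glue {A : Type} {n : ℕ} (P : SqPattern A n) (Q : ExtPattern A n) : Config A :=
  fun p =>
    if h : inBn n p then
      P (⟨p.1.toNat, by unfold inBn at h; omega⟩, ⟨p.2.toNat, by unfold inBn at h; omega⟩)
    else Q ⟨p, h⟩

/-- The extension set `Ext_S(P) = {Q : F_n → A | P ∪ Q ∈ S}`. -/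
def ExtSet {A : Type} {n : ℕ} (S : Set (Config A)) (P : SqPattern A n) :
    Set (ExtPattern A n) :=
  { Q | glue P Q ∈ S }

/-- A finite sequence of sets is an increasing-union chain if no set is contained in
the union of the preceding ones. -/
def IncreasingUnionChain {β : Type} {m : ℕ} (T : Fin m → Set β) : Prop :=
  ∀ i : Fin m, ¬ T i ⊆ ⋃ (j : Fin m) (_ : j < i), T j

/-- The three-letter alphabet of the semi-mirror shift. -/
inductive Letter : Type
  | black
  | white
  | red
deriving DecidableEq

/-- The shift `S'_semi-mirror`: configurations of the semi-mirror shift in which, moreover,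
the two half-planes differ in at most one pair of symmetric positions. -/
def semiMirrorShift' : Set (Config Letter) :=
  { x | (∀ p : Cell, x p ≠ Letter.red) ∨
        (∃ j0 : ℤ, (∀ i j : ℤ, x (i, j) = Letter.red ↔ j = j0) ∧
          (∀ (i k : ℤ), 1 ≤ k → x (i, j0 - k) = Letter.black → x (i, j0 + k) = Letter.black) ∧
          {q : ℤ × ℤ | 1 ≤ q.2 ∧ x (q.1, j0 - q.2) ≠ x (q.1, j0 + q.2)}.Subsingleton) }

/-! A semi-mirror configuration may carry an arbitrary `N × N` block of bits below its red row,
provided the same bits appear mirrored above it: `2 ^ (N * N)` configurations. If the shift were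
the image of an SFT whose forbidden patterns have diameter at most `d`, a preimage would be
glued from its values on the `d`-frame around the lower block, of size `O(d N)`, so for large `N`
two different bit blocks `B ≠ B'` would have preimages agreeing on that frame. Swapping the lower
blocks of these preimages yields a preimage of a configuration with a black cell below the red
row facing a white cell above it, which is not in the shift. -/

def WithinDist (d : ℕ) (p q : Cell) : Prop :=
  (p.1 - q.1).natAbs ≤ d ∧ (p.2 - q.2).natAbs ≤ d

theorem exists_withinDist_of_finite {A : Type} {F : Set (Pattern A)} (hF : F.Finite) :
    ∃ d : ℕ, ∀ P ∈ F, ∀ p ∈ P.supp, ∀ q ∈ P.supp, WithinDist d p q := by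
  obtain ⟨r, hr⟩ := ((hF.biUnion fun P _ => P.supp.finite_toSet).image
    fun p : Cell => p.1.natAbs ⊔ p.2.natAbs).bddAbove
  refine ⟨2 * r, fun P hP p hp q hq => ?_⟩
  have hp' := hr ⟨p, Set.mem_biUnion hP hp, rfl⟩
  have hq' := hr ⟨q, Set.mem_biUnion hP hq, rfl⟩
  simp only [sup_le_iff] at hp' hq'
  unfold WithinDist
  omega

theorem piecewise_mem_shiftOf {A : Type} {F : Set (Pattern A)} {d : ℕ}
    (hF : ∀ P ∈ F, ∀ p ∈ P.supp, ∀ q ∈ P.supp, WithinDist d p q) (R : Finset Cell)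
    {y y' : Config A} (hy : y ∈ shiftOf F) (hy' : y' ∈ shiftOf F)
    (hagree : ∀ p q, q ∈ R → p ∉ R → WithinDist d p q → y p = y' p) :
    R.piecewise y y' ∈ shiftOf F := by
  rintro P hP ⟨u, hu⟩
  by_cases hR : ∃ i : P.supp, (i : Cell) + u ∈ R
  · obtain ⟨i₀, hi₀⟩ := hR
    refine hy P hP ⟨u, fun i => ?_⟩
    rw [← hu i]
    by_cases hi : (i : Cell) + u ∈ R
    · rw [Finset.piecewise_eq_of_mem _ _ _ hi]
    · rw [Finset.piecewise_eq_of_notMem _ _ _ hi]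
      refine hagree _ _ hi₀ hi ?_
      simpa [WithinDist] using hF P hP i i.2 i₀ i₀.2
  · push Not at hR
    exact hy' P hP ⟨u, fun i => by rw [← hu i, Finset.piecewise_eq_of_notMem _ _ _ (hR i)]⟩

theorem IsSofic.exists_ne_piecewise_mem {A : Type} {S : Set (Config A)} (hS : IsSofic S) :
    ∃ m d : ℕ, ∀ R T : Finset Cell,
      (∀ p q, q ∈ R → p ∉ R → WithinDist d p q → p ∈ T) →
      ∀ {ι : Type} [Fintype ι] (x : ι → Config A), (∀ i, x i ∈ S) →
        m ^ T.card < Fintype.card ι →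
        ∃ i j, i ≠ j ∧ R.piecewise (x i) (x j) ∈ S ∧ R.piecewise (x j) (x i) ∈ S := by
  obtain ⟨A', _, S', π, ⟨F, hF, rfl⟩, rfl⟩ := hS
  obtain ⟨d, hd⟩ := exists_withinDist_of_finite hF
  refine ⟨Fintype.card A', d, fun R T hT ι _ x hx hcard => ?_⟩
  choose y hyF hyx using hx
  obtain ⟨i, j, hij, hyij⟩ := Fintype.exists_ne_map_eq_of_card_lt
    (fun i (t : T) => y i t) (by simpa [Fintype.card_fun] using hcard)
  have hagree : ∀ p q, q ∈ R → p ∉ R → WithinDist d p q → y i p = y j p :=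
    fun p q hq hp hpq => congrFun hyij ⟨p, hT p q hq hp hpq⟩
  have hglue : ∀ k l, (∀ p q, q ∈ R → p ∉ R → WithinDist d p q → y k p = y l p) →
      R.piecewise (x k) (x l) ∈ (fun y => π ∘ y) '' shiftOf F := fun k l hkl =>
    ⟨R.piecewise (y k) (y l), piecewise_mem_shiftOf hd R (hyF k) (hyF l) hkl, by
      funext p
      by_cases hp : p ∈ R <;> simp [hp, ← hyx]⟩
  exact ⟨i, j, hij, hglue i j hagree, hglue j i fun p q hq hp hpq => (hagree p q hq hp hpq).symm⟩

def mirror (B : Finset Cell) : Config Letter := fun p =>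
  if p.2 = 0 then .red else if (p.1, |p.2|) ∈ B then .black else .white

theorem mirror_neg (B : Finset Cell) (i j : ℤ) : mirror B (i, -j) = mirror B (i, j) := by
  simp [mirror]

theorem mirror_mem (B : Finset Cell) : mirror B ∈ semiMirrorShift' := by
  refine Or.inr ⟨0, fun i j => ?_, fun i k _ h => ?_, fun q hq => ?_⟩
  · unfold mirror
    split_ifs <;> simp_all
  · rwa [zero_add, ← mirror_neg, ← zero_sub]
  · exact absurd (by rw [zero_sub, mirror_neg, zero_add]) hq.2

theorem piecewise_mirror_not_mem {R B B' : Finset Cell} (hR : ∀ p ∈ R, p.2 < 0) {q : Cell}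
    (hq : 1 ≤ q.2) (hqR : (q.1, -q.2) ∈ R) (hqB : q ∈ B) (hqB' : q ∉ B') :
    R.piecewise (mirror B) (mirror B') ∉ semiMirrorShift' := by
  have hred : R.piecewise (mirror B) (mirror B') (0, 0) = .red := by
    rw [Finset.piecewise_eq_of_notMem _ _ _ fun h => (hR _ h).false]
    simp [mirror]
  rintro (hnored | ⟨j₀, hrow, hblack, -⟩)
  · exact hnored _ hred
  obtain rfl : j₀ = 0 := ((hrow 0 0).1 hred).symm
  have hbelow : R.piecewise (mirror B) (mirror B') (q.1, 0 - q.2) = .black := by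
    rw [zero_sub, Finset.piecewise_eq_of_mem _ _ _ hqR, mirror_neg]
    simp [mirror, abs_of_pos (show 0 < q.2 by omega), hqB, show q.2 ≠ 0 by omega]
  have habove : R.piecewise (mirror B) (mirror B') (q.1, 0 + q.2) = .white := by
    rw [zero_add, Finset.piecewise_eq_of_notMem _ _ _ fun h => by have := hR _ h; omega]
    simp [mirror, abs_of_pos (show 0 < q.2 by omega), hqB', show q.2 ≠ 0 by omega]
  simp [hblack q.1 q.2 hq hbelow] at habove

noncomputable def lowerBox (N : ℕ) : Finset Cell := Finset.Ico 0 (N : ℤ) ×ˢ Finset.Ico (-(N : ℤ)) 0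

noncomputable def upperBox (N : ℕ) : Finset Cell := Finset.Ico 0 (N : ℤ) ×ˢ Finset.Ioc 0 (N : ℤ)

noncomputable def thickLowerBox (N d : ℕ) : Finset Cell :=
  Finset.Ico (-(d : ℤ)) (N + d) ×ˢ Finset.Ico (-(N : ℤ) - d) d

theorem card_upperBox (N : ℕ) : (upperBox N).card = N * N := by
  simp [upperBox, Finset.card_product]

theorem card_thickLowerBox_sdiff_add (N d : ℕ) :
    (thickLowerBox N d \ lowerBox N).card + N * N = (N + 2 * d) * (N + 2 * d) := by
  have hsub : lowerBox N ⊆ thickLowerBox N d := by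
    intro p
    simp only [lowerBox, thickLowerBox, Finset.mem_product, Finset.mem_Ico]
    omega
  have hlow : (lowerBox N).card = N * N := by simp [lowerBox, Finset.card_product]
  have hthick : (thickLowerBox N d).card = (N + 2 * d) * (N + 2 * d) := by
    simp only [thickLowerBox, Finset.card_product, Int.card_Ico]
    congr 1 <;> omega
  rw [← hlow, ← hthick, Finset.card_sdiff_add_card_eq_card hsub]

theorem mem_thickLowerBox_sdiff {N d : ℕ} {p q : Cell} (hq : q ∈ lowerBox N)
    (hp : p ∉ lowerBox N) (hpq : WithinDist d p q) : p ∈ thickLowerBox N d \ lowerBox N := by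
  simp only [lowerBox, thickLowerBox, WithinDist, Finset.mem_sdiff, Finset.mem_product,
    Finset.mem_Ico] at *
  omega

theorem mem_lowerBox_of_mem_upperBox {N : ℕ} {q : Cell} (hq : q ∈ upperBox N) :
    1 ≤ q.2 ∧ (q.1, -q.2) ∈ lowerBox N := by
  simp only [lowerBox, upperBox, Finset.mem_product, Finset.mem_Ico, Finset.mem_Ioc] at *
  omega

theorem lowerBox_snd_neg {N : ℕ} : ∀ p ∈ lowerBox N, p.2 < 0 := by
  intro p hp
  simp only [lowerBox, Finset.mem_product, Finset.mem_Ico] at hp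
  omega

theorem pow_lt_two_pow_mul_self {m d N t : ℕ} (hN : 8 * m * d + d < N)
    (ht : t + N * N = (N + 2 * d) * (N + 2 * d)) : m ^ t < 2 ^ (N * N) := by
  have hmt : m * t < N * N := by nlinarith
  calc m ^ t ≤ (2 ^ m) ^ t := Nat.pow_le_pow_left Nat.lt_two_pow_self.le t
    _ = 2 ^ (m * t) := (pow_mul 2 m t).symm
    _ < 2 ^ (N * N) := Nat.pow_lt_pow_right one_lt_two hmt

/-- The shift `S'_semi-mirror` is not sofic. -/
theorem semiMirrorShift'_not_sofic : ¬ IsSofic semiMirrorShift' := by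
  intro hS
  obtain ⟨m, d, hswap⟩ := hS.exists_ne_piecewise_mem
  set N := 8 * m * d + d + 1
  obtain ⟨⟨B, hB⟩, ⟨B', hB'⟩, hne, hBB', hB'B⟩ := hswap (lowerBox N)
    (thickLowerBox N d \ lowerBox N) (fun _ _ => mem_thickLowerBox_sdiff)
    (fun B : (upperBox N).powerset => mirror B) (fun _ => mirror_mem _)
    (by
      rw [Fintype.card_coe, Finset.card_powerset, card_upperBox]
      exact pow_lt_two_pow_mul_self (by omega) (card_thickLowerBox_sdiff_add N d))
  rw [Finset.mem_powerset] at hB hB'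
  obtain ⟨q, hqB, hqB'⟩ | ⟨q, hqB', hqB⟩ : (∃ q ∈ B, q ∉ B') ∨ ∃ q ∈ B', q ∉ B := by
    by_contra! h
    exact hne (Subtype.ext (Finset.ext fun q => ⟨h.1 q, h.2 q⟩))
  · obtain ⟨hq, hqR⟩ := mem_lowerBox_of_mem_upperBox (hB hqB)
    exact piecewise_mirror_not_mem lowerBox_snd_neg hq hqR hqB hqB' hBB'
  · obtain ⟨hq, hqR⟩ := mem_lowerBox_of_mem_upperBox (hB' hqB')
    exact piecewise_mirror_not_mem lowerBox_snd_neg hq hqR hqB' hqB hB'B
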